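/- Define the binary-string predecessor P(X) by: P(X)(i) holds iff i < |X| and either (X(i) and some j < i has X(j)) or (¬X(i) and all j < i have ¬X(j)). If X is nonempty (some bit of X is 1), then S(P(X)) = X, where S is the binary successor operation on strings. -/
import Mathlib


open Classical in
/-- numeric value of a binary string (finite set of bit positions) -/
noncomputable def strVal (X : Finset ℕ) : ℕ := ∑ i ∈ X, 2 ^ i

open Classical in
/-- length of a string: one plus the largest 1-bit position, 0 for the empty string -/
noncomputable def strLen (X : Finset ℕ) : ℕ := if h : X.Nonempty then X.max' h + 1 else 0

open Classical in
/-- binary string successor -/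
noncomputable def strSucc (X : Finset ℕ) : Finset ℕ :=
  (Finset.range (strLen X + 1)).filter
    (fun i => (i ∈ X ∧ ∃ j < i, j ∉ X) ∨ (i ∉ X ∧ ∀ j < i, j ∈ X))

open Classical in
/-- binary string predecessor -/
noncomputable def strPred (X : Finset ℕ) : Finset ℕ :=
  (Finset.range (strLen X)).filter
    (fun i => (i ∈ X ∧ ∃ j < i, j ∈ X) ∨ (i ∉ X ∧ ∀ j < i, j ∉ X))

lemma strLen_range (k : ℕ) : strLen (Finset.range k) = k := by
  unfold strLen
  rcases Nat.eq_zero_or_pos k with rfl | hk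
  · simp
  · have h : (Finset.range k).Nonempty := ⟨0, Finset.mem_range.2 hk⟩
    rw [dif_pos h]
    have : (Finset.range k).max' h = k - 1 := by
      apply le_antisymm
      · exact Nat.le_sub_one_of_lt (Finset.mem_range.1 ((Finset.range k).max'_mem h))
      · exact Finset.le_max' _ _ (Finset.mem_range.2 (by omega))
    omega

lemma strSucc_range (k : ℕ) : strSucc (Finset.range k) = {k} := by
  ext i
  simp only [strSucc, strLen_range, Finset.mem_filter, Finset.mem_range,
    Finset.mem_singleton]
  constructor
  · rintro ⟨hb, ⟨hik, j, hj, hjk⟩ | ⟨hik, hall⟩⟩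
    · omega
    · omega
  · rintro rfl
    exact ⟨by omega, Or.inr ⟨by omega, fun j hj => by omega⟩⟩

theorem stmt_8 (X : Finset ℕ) (hX : X.Nonempty) : strSucc (strPred X) = X := by
  classical
  set k := X.min' hX with hk
  have hkX : k ∈ X := X.min'_mem hX
  have hmin : ∀ i ∈ X, k ≤ i := fun i hi => X.min'_le i hi
  set M := X.max' hX with hM
  have hMX : M ∈ X := X.max'_mem hX
  have hmax : ∀ i ∈ X, i ≤ M := fun i hi => X.le_max' i hi
  have hP : strPred X = Finset.range k ∪ X.filter (fun i => k < i) := by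
    ext i
    simp only [strPred, strLen, dif_pos hX, Finset.mem_filter, Finset.mem_range,
      Finset.mem_union, ← hM]
    constructor
    · rintro ⟨hb, ⟨hiX, j, hj, hjX⟩ | ⟨hiX, hall⟩⟩
      · exact Or.inr ⟨hiX, lt_of_le_of_lt (hmin j hjX) hj⟩
      · left
        by_contra h
        push_neg at h
        have hki : k < i := lt_of_le_of_ne h (fun he => hiX (he ▸ hkX))
        exact hall k hki hkX
    · rintro (h | ⟨hiX, hki⟩)
      · have hik : ∀ j < i, j ∉ X := fun j hj hjX => by
          have := hmin j hjX; omega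
        have hiX : i ∉ X := fun hiX => by have := hmin i hiX; omega
        have : k ≤ M := hmin M hMX
        exact ⟨by omega, Or.inr ⟨hiX, hik⟩⟩
      · exact ⟨by have := hmax i hiX; omega, Or.inl ⟨hiX, k, hki, hkX⟩⟩
  by_cases hsing : ∃ m ∈ X, k < m
  · -- generic case: X has an element above k
    obtain ⟨m, hmX, hkm⟩ := hsing
    have hkM : k < M := lt_of_lt_of_le hkm (hmax m hmX)
    set Y := Finset.range k ∪ X.filter (fun i => k < i) with hY
    have hYmem : ∀ i, i ∈ Y ↔ i < k ∨ (i ∈ X ∧ k < i) := by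
      intro i; simp [hY]
    have hMY : M ∈ Y := (hYmem M).2 (Or.inr ⟨hMX, hkM⟩)
    have hYne : Y.Nonempty := ⟨M, hMY⟩
    have hYmax : Y.max' hYne = M := by
      apply le_antisymm
      · apply Finset.max'_le
        intro i hi
        rcases (hYmem i).1 hi with h | ⟨h1, _⟩
        · omega
        · exact hmax i h1
      · exact Finset.le_max' _ _ hMY
    have hYlen : strLen Y = M + 1 := by
      unfold strLen; rw [dif_pos hYne, hYmax]
    rw [hP]
    ext i
    simp only [strSucc, hYlen, Finset.mem_filter, Finset.mem_range]
    constructor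
    · rintro ⟨hb, ⟨hiY, j, hj, hjY⟩ | ⟨hiY, hall⟩⟩
      · rcases (hYmem i).1 hiY with h | ⟨h1, _⟩
        · exfalso
          exact hjY ((hYmem j).2 (Or.inl (by omega)))
        · exact h1
      · have hik : ¬ i < k := fun h => hiY ((hYmem i).2 (Or.inl h))
        rcases Nat.lt_or_ge k i with hki | hki
        · exfalso
          have : k ∈ Y := hall k hki
          rcases (hYmem k).1 this with h | ⟨_, h⟩ <;> omega
        · have : i = k := by omega
          exact this ▸ hkX
    · intro hiX
      have hki : k ≤ i := hmin i hiX
      have hiM : i ≤ M := hmax i hiX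
      rcases Nat.eq_or_lt_of_le hki with rfl | hki'
      · refine ⟨by omega, Or.inr ⟨fun h => ?_, fun j hj => (hYmem j).2 (Or.inl hj)⟩⟩
        rcases (hYmem k).1 h with h | ⟨_, h⟩ <;> omega
      · refine ⟨by omega, Or.inl ⟨(hYmem i).2 (Or.inr ⟨hiX, hki'⟩), k, hki', fun h => ?_⟩⟩
        rcases (hYmem k).1 h with h | ⟨_, h⟩ <;> omega
  · -- X = {k}
    push_neg at hsing
    have hXeq : X = {k} := by
      ext i
      simp only [Finset.mem_singleton]
      constructor
      · intro hi
        have h1 := hmin i hi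
        have h2 := hsing i hi
        omega
      · rintro rfl; exact hkX
    have hfilter : X.filter (fun i => k < i) = ∅ :=
      Finset.filter_eq_empty_iff.2 (fun i hi => by have := hsing i hi; omega)
    rw [hP, hfilter, Finset.union_empty, strSucc_range, hXeq]
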